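/- arXiv:2004.02336 — 2 statements merged into one kernel-verified Lean document; each statement's English description precedes it below -/
import Mathlib

section
/- Let M be a d x d symmetric PSD matrix with orthonormal eigenvectors, let U_hat be the d x r matrix of eigenvectors of M with eigenvalue strictly greater than a threshold mu, and U_hat_c the d x (d-r) matrix of the remaining eigenvectors (so [U_hat, U_hat_c] is orthogonal). If V is a d x L matrix with orthonormal columns and there exists epsilon in [0,1) and a matrix Q with ||Q||_2 <= 1 such that ||U_hat_c - W Q||_2 <= epsilon for some d x (d-r) matrix W with orthonormal columns whose column span is orthogonal to that of V, then ||U_hat_c^T V||_2 <= sqrt(2 epsilon). -/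
open Matrix

/-!
Since `Wᵀ V = 0`, we have `Ucᵀ V = (Uc - W Q)ᵀ V`, and `V` has orthonormal columns, so
`‖Ucᵀ V‖₂ ≤ ‖Uc - W Q‖₂ ≤ ε`; for `0 ≤ ε < 1` this is at most `√(2ε)`.
-/

/-- Spectral norm of a real matrix: operator norm w.r.t. Euclidean norms. -/
noncomputable def specNorm {m n : ℕ} (M : Matrix (Fin m) (Fin n) ℝ) : ℝ :=
  ‖LinearMap.toContinuousLinearMap (Matrix.toEuclideanLin M)‖

open scoped Matrix.Norms.L2Operator

namespace Matrix

lemma transpose_mul_eq_sub_mul_transpose_mul {R l m n k : Type*} [Fintype l] [Fintype k]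
    [CommRing R] {W : Matrix l k R} {V : Matrix l n R} (hWV : Wᵀ * V = 0)
    (U : Matrix l m R) (Q : Matrix k m R) : Uᵀ * V = (U - W * Q)ᵀ * V := by
  rw [transpose_sub, transpose_mul, Matrix.sub_mul, Matrix.mul_assoc, hWV, Matrix.mul_zero,
    sub_zero]

variable {l m n : Type*} [Fintype l] [Fintype m] [Fintype n]

lemma l2_opNorm_transpose [DecidableEq m] [DecidableEq n] (A : Matrix m n ℝ) : ‖Aᵀ‖ = ‖A‖ := by
  simpa only [conjTranspose_eq_transpose_of_trivial] using l2_opNorm_conjTranspose A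

lemma l2_opNorm_one_le [DecidableEq n] : ‖(1 : Matrix n n ℝ)‖ ≤ 1 := by
  rw [cstar_norm_def, map_one, ContinuousLinearMap.one_def]
  exact ContinuousLinearMap.norm_id_le

lemma l2_opNorm_le_one_of_transpose_mul_self_eq_one [DecidableEq n] {V : Matrix m n ℝ}
    (hV : Vᵀ * V = 1) : ‖V‖ ≤ 1 := by
  have hsq : ‖V‖ * ‖V‖ ≤ 1 := by
    rw [← l2_opNorm_conjTranspose_mul_self, conjTranspose_eq_transpose_of_trivial, hV]
    exact l2_opNorm_one_le
  nlinarith [norm_nonneg V]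

lemma l2_opNorm_transpose_mul_le [DecidableEq l] [DecidableEq m] [DecidableEq n]
    (A : Matrix l m ℝ) {V : Matrix l n ℝ} (hV : Vᵀ * V = 1) : ‖Aᵀ * V‖ ≤ ‖A‖ :=
  calc ‖Aᵀ * V‖ ≤ ‖Aᵀ‖ * ‖V‖ := l2_opNorm_mul _ _
    _ ≤ ‖A‖ * 1 := by
      rw [l2_opNorm_transpose]
      exact mul_le_mul_of_nonneg_left (l2_opNorm_le_one_of_transpose_mul_self_eq_one hV)
        (norm_nonneg _)
    _ = ‖A‖ := mul_one _

end Matrix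

lemma specNorm_eq_l2_opNorm {m n : ℕ} (A : Matrix (Fin m) (Fin n) ℝ) : specNorm A = ‖A‖ :=
  (l2_opNorm_def A).symm

lemma Real.le_sqrt_two_mul_self {x : ℝ} (hx₀ : 0 ≤ x) (hx₂ : x ≤ 2) : x ≤ √(2 * x) :=
  Real.le_sqrt_of_sq_le (by nlinarith)

theorem stmt9_general {d r L : ℕ}
    (Uc : Matrix (Fin d) (Fin (d - r)) ℝ)
    (V : Matrix (Fin d) (Fin L) ℝ) (hV : Vᵀ * V = 1)
    (W : Matrix (Fin d) (Fin (d - r)) ℝ) (hWV : Wᵀ * V = 0)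
    (ε : ℝ) (hε : ε ∈ Set.Ico (0:ℝ) 1)
    (Q : Matrix (Fin (d - r)) (Fin (d - r)) ℝ)
    (happrox : specNorm (Uc - W * Q) ≤ ε) :
    specNorm (Ucᵀ * V) ≤ Real.sqrt (2 * ε) := by
  rw [specNorm_eq_l2_opNorm] at happrox ⊢
  calc ‖Ucᵀ * V‖ = ‖(Uc - W * Q)ᵀ * V‖ := by
        rw [transpose_mul_eq_sub_mul_transpose_mul hWV Uc Q]
    _ ≤ ‖Uc - W * Q‖ := l2_opNorm_transpose_mul_le _ hV
    _ ≤ ε := happrox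
    _ ≤ √(2 * ε) := Real.le_sqrt_two_mul_self hε.1 (by linarith [hε.2])

theorem stmt9 {d r L : ℕ} (hr : r ≤ d)
    (M : Matrix (Fin d) (Fin d) ℝ) (hsym : M.IsSymm)
    (hpsd : ∀ v : Fin d → ℝ, 0 ≤ v ⬝ᵥ M.mulVec v)
    (mu : ℝ)
    (Uh : Matrix (Fin d) (Fin r) ℝ) (Uc : Matrix (Fin d) (Fin (d - r)) ℝ)
    -- [Uh, Uc] is an orthogonal matrix
    (hUh : Uhᵀ * Uh = 1) (hUc : Ucᵀ * Uc = 1) (hUhUc : Uhᵀ * Uc = 0)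
    (hspan : Uh * Uhᵀ + Uc * Ucᵀ = 1)
    -- columns of Uh are eigenvectors with eigenvalue > mu, columns of Uc the rest
    (alpha : Fin r → ℝ) (beta : Fin (d - r) → ℝ)
    (heigUh : ∀ i : Fin r, M.mulVec (fun k => Uh k i) = alpha i • fun k => Uh k i)
    (heigUc : ∀ i : Fin (d - r), M.mulVec (fun k => Uc k i) = beta i • fun k => Uc k i)
    (halpha : ∀ i, mu < alpha i) (hbeta : ∀ i, beta i ≤ mu)
    (V : Matrix (Fin d) (Fin L) ℝ) (hV : Vᵀ * V = 1)
    (W : Matrix (Fin d) (Fin (d - r)) ℝ) (hW : Wᵀ * W = 1) (hWV : Wᵀ * V = 0)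
    (ε : ℝ) (hε : ε ∈ Set.Ico (0:ℝ) 1)
    (Q : Matrix (Fin (d - r)) (Fin (d - r)) ℝ) (hQ : specNorm Q ≤ 1)
    (happrox : specNorm (Uc - W * Q) ≤ ε) :
    specNorm (Ucᵀ * V) ≤ Real.sqrt (2 * ε) :=
  stmt9_general Uc V hV W hWV ε hε Q happrox
end

section
/- Let Sigma and Sigma_hat be d x d symmetric PSD matrices with eigenvalues lambda_1 >= ... >= lambda_d and lambda_hat_1 >= ... >= lambda_hat_d respectively. Let U_{<= (1-2delta) lambda_L} be the matrix of eigenvectors of Sigma with eigenvalues at most (1-2delta) lambda_L, and let U_hat_{> (1-delta) lambda_hat_L} and U_hat_{<= (1-delta) lambda_hat_L} be the matrices of eigenvectors of Sigma_hat with eigenvalues above and at most (1-delta) lambda_hat_L respectively. If V_L is a d x L matrix with orthonormal columns satisfying ||U_hat_{<= (1-delta) lambda_hat_L}^T V_L||_2 <= epsilon, then ||U_{<= (1-2delta) lambda_L}^T V_L||_2 <= ||Sigma - Sigma_hat||_2 / ((1-delta)(lambda_hat_L - lambda_L) + delta lambda_L) + epsilon, provided the denominator is positive. -/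
/-!
Let `P` be the spectral projection of `Σ` onto eigenvalues `≤ α = (1 - 2δ) λ_L` and `Q` that of
`Σ̂` onto eigenvalues `> μ = (1 - δ) λ̂_L`, and let `B` invert `Σ̂` on the range of `Q`. Since `P`
commutes with `Σ`, `X = P Q = P Σ̂ B` satisfies `X = (P Σ) X B - P (Σ - Σ̂) B`; with `‖P Σ‖ ≤ α`
(this is where `Σ ⪰ 0` enters) and `‖B‖ ≤ μ⁻¹` this gives `‖X‖ ≤ ‖Σ - Σ̂‖ / (μ - α)`, where
`μ - α = (1 - δ)(λ̂_L - λ_L) + δ λ_L`. Finally `P V = P (P̂ V) + X V` because `P̂ + Q = 1`.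
-/

open Matrix Finset

open scoped Matrix.Norms.L2Operator

theorem norm_mul_le_div_of_gap {R : Type*} [NormedRing R] {P Q S Sh B : R} {α μ : ℝ}
    (hQB : Q * B = B) (hShB : Sh * B = Q) (hPSP : P * S * P = P * S)
    (hPS : ‖P * S‖ ≤ α) (hP : ‖P‖ ≤ 1) (hB : ‖B‖ ≤ μ⁻¹) (hα : 0 ≤ α) (hαμ : α < μ) :
    ‖P * Q‖ ≤ ‖S - Sh‖ / (μ - α) := by
  have hμ : 0 < μ := hα.trans_lt hαμ
  have hsylvester : P * Q = (P * S) * (P * Q) * B - P * (S - Sh) * B := by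
    have : (P * S) * (P * Q) * B = P * S * B := by
      rw [show P * S * (P * Q) * B = P * S * P * (Q * B) by noncomm_ring, hPSP, hQB]
    rw [this, ← hShB]
    noncomm_ring
  have hrec : ‖P * Q‖ * μ ≤ α * ‖P * Q‖ + ‖S - Sh‖ := by
    have hB' : ‖B‖ * μ ≤ 1 := by rwa [← le_div_iff₀ hμ, one_div]
    calc ‖P * Q‖ * μ ≤ (‖P * S‖ * ‖P * Q‖ * ‖B‖ + ‖P‖ * ‖S - Sh‖ * ‖B‖) * μ := by
          gcongr
          conv_lhs => rw [hsylvester]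
          refine (norm_sub_le _ _).trans (add_le_add ?_ ?_)
          · exact (norm_mul_le _ _).trans (by gcongr; exact norm_mul_le (P * S) (P * Q))
          · exact (norm_mul_le _ _).trans (by gcongr; exact norm_mul_le P (S - Sh))
      _ ≤ (α * ‖P * Q‖ * ‖B‖ + 1 * ‖S - Sh‖ * ‖B‖) * μ := by gcongr
      _ = (α * ‖P * Q‖ + ‖S - Sh‖) * (‖B‖ * μ) := by ring
      _ ≤ α * ‖P * Q‖ + ‖S - Sh‖ := mul_le_of_le_one_right (by positivity) hB'
  rw [le_div_iff₀ (sub_pos.mpr hαμ)]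
  linarith

theorem norm_le_one_of_transpose_mul_self_eq_one {n m : Type*} [Fintype n] [Fintype m]
    [DecidableEq m] {V : Matrix n m ℝ} (hV : Vᵀ * V = 1) : ‖V‖ ≤ 1 := by
  have hsq : ‖V‖ * ‖V‖ ≤ 1 := by
    rw [← l2_opNorm_conjTranspose_mul_self, conjTranspose_eq_transpose_of_trivial, hV,
      ← diagonal_one, l2_opNorm_diagonal]
    exact pi_norm_le_iff_of_nonneg zero_le_one |>.mpr fun _ => by simp
  nlinarith [norm_nonneg V]

section DiagonalConj

variable {n : Type*} [Fintype n] [DecidableEq n] {W : Matrix n n ℝ}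

theorem diagonal_conj_mul (hW : W * Wᵀ = 1) (f g : n → ℝ) :
    (Wᵀ * diagonal f * W) * (Wᵀ * diagonal g * W) = Wᵀ * diagonal (f * g) * W := by
  calc Wᵀ * diagonal f * W * (Wᵀ * diagonal g * W)
      = Wᵀ * diagonal f * (W * Wᵀ) * diagonal g * W := by simp only [Matrix.mul_assoc]
    _ = Wᵀ * (diagonal f * diagonal g) * W := by
      rw [hW, Matrix.mul_one, Matrix.mul_assoc Wᵀ]
    _ = Wᵀ * diagonal (f * g) * W := by rw [diagonal_mul_diagonal]; rfl

theorem diagonal_conj_add (f g : n → ℝ) :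
    Wᵀ * diagonal f * W + Wᵀ * diagonal g * W = Wᵀ * diagonal (f + g) * W := by
  rw [← Matrix.add_mul, ← Matrix.mul_add, diagonal_add]; rfl

theorem diagonal_conj_one (hW : W * Wᵀ = 1) : Wᵀ * diagonal 1 * W = 1 := by
  rw [show diagonal (1 : n → ℝ) = 1 from diagonal_one, Matrix.mul_one, mul_eq_one_comm.mp hW]

theorem norm_diagonal_conj_le (hW : W * Wᵀ = 1) (f : n → ℝ) :
    ‖Wᵀ * diagonal f * W‖ ≤ ‖f‖ := by
  have hWt : ‖Wᵀ‖ ≤ 1 := norm_le_one_of_transpose_mul_self_eq_one (by rwa [transpose_transpose])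
  have hW' : ‖W‖ ≤ 1 := norm_le_one_of_transpose_mul_self_eq_one (mul_eq_one_comm.mp hW)
  calc ‖Wᵀ * diagonal f * W‖ ≤ ‖Wᵀ‖ * ‖diagonal f‖ * ‖W‖ :=
        (l2_opNorm_mul _ _).trans (by gcongr; exact l2_opNorm_mul _ _)
    _ ≤ 1 * ‖f‖ * 1 := by rw [l2_opNorm_diagonal]; gcongr
    _ = ‖f‖ := by ring

theorem norm_diagonal_conj_ite_le_one (hW : W * Wᵀ = 1) (p : n → Prop) [DecidablePred p] :
    ‖Wᵀ * diagonal (fun i => if p i then (1 : ℝ) else 0) * W‖ ≤ 1 :=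
  (norm_diagonal_conj_le hW _).trans <|
    pi_norm_le_iff_of_nonneg zero_le_one |>.mpr fun i => by split_ifs <;> simp

end DiagonalConj

theorem of_mul_transpose_eq_one {m n : Type*} [Fintype n] [DecidableEq m] {u : m → n → ℝ}
    (hu : ∀ i j, u i ⬝ᵥ u j = if i = j then 1 else 0) : of u * (of u)ᵀ = 1 := by
  ext i j
  simpa [mul_apply, dotProduct, one_apply] using hu i j

theorem sum_filter_vecMulVec_eq {m n : Type*} [Fintype m] [DecidableEq m] (u : m → n → ℝ)
    (p : m → Prop) [DecidablePred p] :
    ∑ l ∈ univ.filter p, vecMulVec (u l) (u l) =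
      (of u)ᵀ * diagonal (fun l => if p l then (1 : ℝ) else 0) * of u := by
  ext a b
  rw [mul_apply]
  simp [Matrix.sum_apply, vecMulVec_apply, Finset.sum_filter]

theorem eq_transpose_mul_diagonal_mul_of_mulVec_eq_smul {n : Type*} [Fintype n] [DecidableEq n]
    {u : n → n → ℝ} {S : Matrix n n ℝ} {lam : n → ℝ}
    (hu : of u * (of u)ᵀ = 1) (h : ∀ i, S *ᵥ u i = lam i • u i) :
    S = (of u)ᵀ * diagonal lam * of u := by
  have hcols : S * (of u)ᵀ = (of u)ᵀ * diagonal lam := by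
    ext a i
    rw [mul_diagonal]
    simpa [mul_apply, mulVec, dotProduct, mul_comm] using congrFun (h i) a
  calc S = S * ((of u)ᵀ * of u) := by rw [mul_eq_one_comm.mp hu, Matrix.mul_one]
    _ = (of u)ᵀ * diagonal lam * of u := by rw [← Matrix.mul_assoc, hcols]

theorem nonneg_of_mulVec_eq_smul {n : Type*} [Fintype n] {S : Matrix n n ℝ}
    (hS : ∀ v, 0 ≤ v ⬝ᵥ S *ᵥ v) {v : n → ℝ} (hv : v ⬝ᵥ v = 1) {c : ℝ} (h : S *ᵥ v = c • v) :
    0 ≤ c := by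
  simpa [h, hv] using hS v

theorem norm_eigenprojection_mul_le_of_gap {n : Type*} [Fintype n] [DecidableEq n]
    {W Wh : Matrix n n ℝ} (hW : W * Wᵀ = 1) (hWh : Wh * Whᵀ = 1) {lam lamh : n → ℝ}
    (hlam : ∀ i, 0 ≤ lam i) {α μ : ℝ} (hα : 0 ≤ α) (hαμ : α < μ) :
    ‖(Wᵀ * diagonal (fun i => if lam i ≤ α then (1 : ℝ) else 0) * W) *
        (Whᵀ * diagonal (fun i => if lamh i ≤ μ then (0 : ℝ) else 1) * Wh)‖ ≤
      ‖Wᵀ * diagonal lam * W - Whᵀ * diagonal lamh * Wh‖ / (μ - α) := by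
  have hμ : 0 < μ := hα.trans_lt hαμ
  refine norm_mul_le_div_of_gap
    (B := Whᵀ * diagonal (fun i => if lamh i ≤ μ then 0 else (lamh i)⁻¹) * Wh)
    ?_ ?_ ?_ ?_ ?_ ?_ hα hαμ
  · rw [diagonal_conj_mul hWh]
    congr 3
    ext i
    simp only [Pi.mul_apply]
    split_ifs <;> ring
  · rw [diagonal_conj_mul hWh]
    congr 3
    ext i
    simp only [Pi.mul_apply]
    split_ifs with h
    · ring
    · exact mul_inv_cancel₀ (by linarith [not_le.mp h])
  · rw [diagonal_conj_mul hW, diagonal_conj_mul hW]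
    congr 3
    ext i
    simp only [Pi.mul_apply]
    split_ifs <;> ring
  · rw [diagonal_conj_mul hW]
    refine (norm_diagonal_conj_le hW _).trans (pi_norm_le_iff_of_nonneg hα |>.mpr fun i => ?_)
    simp only [Pi.mul_apply, Real.norm_eq_abs]
    split_ifs with h
    · rwa [one_mul, abs_of_nonneg (hlam i)]
    · simpa using hα
  · exact norm_diagonal_conj_ite_le_one hW _
  · refine (norm_diagonal_conj_le hWh _).trans
      (pi_norm_le_iff_of_nonneg (by positivity) |>.mpr fun i => ?_)
    split_ifs with h
    · simpa using hμ.le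
    · rw [norm_inv, Real.norm_eq_abs, abs_of_pos (hμ.trans (not_le.mp h))]
      exact inv_anti₀ hμ (not_le.mp h).le

theorem specNorm_eq_norm {m n : ℕ} (M : Matrix (Fin m) (Fin n) ℝ) : specNorm M = ‖M‖ := rfl

theorem stmt10 {d L : ℕ} (hL0 : 0 < L) (hLd : L ≤ d)
    (Sig Sigh : Matrix (Fin d) (Fin d) ℝ)
    (hpsd : ∀ v : Fin d → ℝ, 0 ≤ v ⬝ᵥ Sig.mulVec v)
    (lam : Fin d → ℝ) (u : Fin d → Fin d → ℝ)
    (lamh : Fin d → ℝ) (uh : Fin d → Fin d → ℝ)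
    (horth : ∀ i j : Fin d, u i ⬝ᵥ u j = if i = j then 1 else 0)
    (horthh : ∀ i j : Fin d, uh i ⬝ᵥ uh j = if i = j then 1 else 0)
    (heig : ∀ l, Sig.mulVec (u l) = lam l • u l)
    (heigh : ∀ l, Sigh.mulVec (uh l) = lamh l • uh l)
    (δ : ℝ) (hδ : δ ∈ Set.Ioo (0:ℝ) (1/2))
    -- projection onto the eigenvectors of Sig with eigenvalue ≤ (1-2δ)·λ_L
    (PU : Matrix (Fin d) (Fin d) ℝ)
    (hPU : PU = ∑ l ∈ Finset.univ.filter
        (fun l => lam l ≤ (1 - 2*δ) * lam ⟨L - 1, by omega⟩), vecMulVec (u l) (u l))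
    -- projection onto the eigenvectors of Sigh with eigenvalue ≤ (1-δ)·λ̂_L
    (PUh : Matrix (Fin d) (Fin d) ℝ)
    (hPUh : PUh = ∑ l ∈ Finset.univ.filter
        (fun l => lamh l ≤ (1 - δ) * lamh ⟨L - 1, by omega⟩), vecMulVec (uh l) (uh l))
    (V : Matrix (Fin d) (Fin L) ℝ) (hV : Vᵀ * V = 1)
    (ε : ℝ) (hVh : specNorm (PUh * V) ≤ ε)
    (hden : 0 < (1 - δ) * (lamh ⟨L - 1, by omega⟩ - lam ⟨L - 1, by omega⟩)
        + δ * lam ⟨L - 1, by omega⟩) :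
    specNorm (PU * V) ≤ specNorm (Sig - Sigh) /
        ((1 - δ) * (lamh ⟨L - 1, by omega⟩ - lam ⟨L - 1, by omega⟩)
          + δ * lam ⟨L - 1, by omega⟩) + ε := by
  obtain ⟨-, hδ⟩ := hδ
  set k : Fin d := ⟨L - 1, by omega⟩
  simp only [specNorm_eq_norm] at hVh ⊢
  have hW := of_mul_transpose_eq_one horth
  have hWh := of_mul_transpose_eq_one horthh
  have hlam i : 0 ≤ lam i := nonneg_of_mulVec_eq_smul hpsd (by simpa using horth i i) (heig i)
  set Q := (of uh)ᵀ * diagonal (fun i => if lamh i ≤ (1 - δ) * lamh k then (0 : ℝ) else 1) * of uh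
  have hsplit : PUh + Q = 1 := by
    rw [hPUh, sum_filter_vecMulVec_eq, diagonal_conj_add, ← diagonal_conj_one hWh]
    congr 3
    ext i
    simp only [Pi.add_apply, Pi.one_apply]
    split_ifs <;> norm_num
  have hgap : ‖PU * Q‖ ≤ ‖Sig - Sigh‖ /
      ((1 - δ) * (lamh k - lam k) + δ * lam k) := by
    rw [show (1 - δ) * (lamh k - lam k) + δ * lam k = (1 - δ) * lamh k - (1 - 2 * δ) * lam k by
        ring, hPU, sum_filter_vecMulVec_eq, eq_transpose_mul_diagonal_mul_of_mulVec_eq_smul hW heig,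
      eq_transpose_mul_diagonal_mul_of_mulVec_eq_smul hWh heigh]
    exact norm_eigenprojection_mul_le_of_gap hW hWh hlam (mul_nonneg (by linarith) (hlam k))
      (by linarith)
  have hPU1 : ‖PU‖ ≤ 1 := by
    rw [hPU, sum_filter_vecMulVec_eq]
    exact norm_diagonal_conj_ite_le_one hW _
  have hV1 : ‖V‖ ≤ 1 := norm_le_one_of_transpose_mul_self_eq_one hV
  calc ‖PU * V‖ = ‖PU * (PUh * V) + (PU * Q) * V‖ := by
        rw [Matrix.mul_assoc, ← Matrix.mul_add, ← Matrix.add_mul, hsplit, Matrix.one_mul]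
    _ ≤ ‖PU‖ * ‖PUh * V‖ + ‖PU * Q‖ * ‖V‖ :=
        (norm_add_le _ _).trans (add_le_add (l2_opNorm_mul _ _) (l2_opNorm_mul _ _))
    _ ≤ 1 * ε + ‖Sig - Sigh‖ / ((1 - δ) * (lamh k - lam k) + δ * lam k) * 1 := by
        gcongr
    _ = _ := by ring
end
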